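/- Fix T ∈ ℝ, R > 0 and let ξ(θ,φ) = (T, R sinθ cosφ, R sinθ sinφ, R cosθ), with β₀ = (1,0,0,0), β₁ = (0, sinθ cosφ, sinθ sinφ, cosθ), β₂ = ∂_θξ, β₃ = ∂_φξ. Let ψ⁰, ψ¹, ψ², ψ³ : (0,π)×ℝ → ℝ be smooth, set F_ε = ξ + ε·(ψ⁰β₀ + ψ¹β₁ + ψ²β₂ + ψ³β₃), and let H(ε) = s^{AB}(ε)(∂_A∂_BF_ε − Γ^C_{AB}(ε)∂_CF_ε) be the curvature vector of F_ε, where s_{AB}(ε) = η(∂_AF_ε, ∂_BF_ε). Then the time component of the curvature vector satisfies, at every (θ,φ) ∈ (0,π)×ℝ, d/dε|_{ε=0} H⁰(ε)(θ,φ) = (1/R²)·Δ̊ψ⁰(θ,φ), where Δ̊u = ∂²_θ u + cotθ·∂_θ u + sin⁻²θ·∂²_φ u. -/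

import Mathlib

/-!
The time components of `β₁`, `β₂ = ∂_θ ξ` and `β₃ = ∂_φ ξ` vanish, so `F_ε⁰ = T + ε ψ⁰`.
The curvature vector of any surface is the Laplace–Beltrami operator of its induced metric
applied to the embedding, `H = Δ_{s(ε)} F_ε`, and this operator kills constants; hence
`H⁰(ε) = ε · Δ_{s(ε)} ψ⁰` exactly. The metric `s(ε)` and its first derivatives are polynomial
in `ε`, and `s(0) = R² (dθ² + sin²θ dφ²)` is invertible for `0 < θ < π`, so `Δ_{s(ε)} ψ⁰` is
continuous at `ε = 0` and the derivative is `Δ_{s(0)} ψ⁰ = R⁻² Δ̊ψ⁰`.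
-/

open Real

noncomputable section

/-- The Minkowski bilinear form on `ℝ⁴`: `η(v,w) = -v⁰w⁰ + v¹w¹ + v²w² + v³w³`. -/
def mink (v w : Fin 4 → ℝ) : ℝ :=
  -(v 0 * w 0) + v 1 * w 1 + v 2 * w 2 + v 3 * w 3

/-- Partial derivative `∂_A` with respect to the spherical coordinates `(θ,φ)`:
`A = 0` is `∂_θ`, `A = 1` is `∂_φ`. -/
def pd {X : Type*} [NormedAddCommGroup X] [NormedSpace ℝ X]
    (A : Fin 2) (f : ℝ → ℝ → X) (θ φ : ℝ) : X :=
  if A = 0 then deriv (fun t => f t φ) θ else deriv (fun p => f θ p) φ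

/-- The standard parametrization `ξ(θ,φ) = (T, R sinθ cosφ, R sinθ sinφ, R cosθ)`
of the round sphere `S_{T,R}` in Minkowski spacetime. -/
def xi (T R : ℝ) (θ φ : ℝ) : Fin 4 → ℝ :=
  ![T, R * sin θ * cos φ, R * sin θ * sin φ, R * cos θ]

/-- The ambient basis field `β₀ = (1,0,0,0)`. -/
def beta0 : Fin 4 → ℝ := ![1, 0, 0, 0]

/-- The ambient basis field `β₁ = (0, sinθ cosφ, sinθ sinφ, cosθ)`. -/
def beta1 (θ φ : ℝ) : Fin 4 → ℝ := ![0, sin θ * cos φ, sin θ * sin φ, cos θ]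

/-- The perturbed embedding `F_ε = ξ + ε (ψ⁰β₀ + ψ¹β₁ + ψ²β₂ + ψ³β₃)`,
where `β₂ = ∂_θ ξ` and `β₃ = ∂_φ ξ`. -/
def Fpert (T R : ℝ) (ψ : Fin 4 → ℝ → ℝ → ℝ) (ε : ℝ) (θ φ : ℝ) : Fin 4 → ℝ :=
  xi T R θ φ + ε • (ψ 0 θ φ • beta0 + ψ 1 θ φ • beta1 θ φ
    + ψ 2 θ φ • pd 0 (xi T R) θ φ + ψ 3 θ φ • pd 1 (xi T R) θ φ)

/-- The induced metric `s_{AB} = η(∂_A F, ∂_B F)` of a parametrized surface `F`. -/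
def met (F : ℝ → ℝ → Fin 4 → ℝ) (A B : Fin 2) (θ φ : ℝ) : ℝ :=
  mink (pd A F θ φ) (pd B F θ φ)

/-- The inverse `s^{AB}` of the induced metric, as a `2×2` matrix. -/
def metInv (F : ℝ → ℝ → Fin 4 → ℝ) (θ φ : ℝ) : Matrix (Fin 2) (Fin 2) ℝ :=
  (Matrix.of fun A B => met F A B θ φ)⁻¹

/-- The Christoffel symbols
`Γ^C_{AB} = ½ s^{CD} (∂_A s_{DB} + ∂_B s_{AD} - ∂_D s_{AB})` of the induced metric. -/
def christoffel (F : ℝ → ℝ → Fin 4 → ℝ) (C A B : Fin 2) (θ φ : ℝ) : ℝ :=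
  (1 / 2) * ∑ D : Fin 2, metInv F θ φ C D *
    (pd A (met F D B) θ φ + pd B (met F A D) θ φ - pd D (met F A B) θ φ)

/-- The extrinsic curvature (mean curvature) vector
`H = s^{AB} (∂_A ∂_B F - Γ^C_{AB} ∂_C F)` of a parametrized surface `F`. -/
def curvVec (F : ℝ → ℝ → Fin 4 → ℝ) (θ φ : ℝ) : Fin 4 → ℝ :=
  ∑ A : Fin 2, ∑ B : Fin 2, metInv F θ φ A B •
    (pd A (pd B F) θ φ - ∑ C : Fin 2, christoffel F C A B θ φ • pd C F θ φ)

/-- The Laplace–Beltrami operator of the standard round metric on `S²`: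
`Δ̊u = ∂²_θ u + cotθ ∂_θ u + sin⁻²θ ∂²_φ u`. -/
def sphLap (u : ℝ → ℝ → ℝ) (θ φ : ℝ) : ℝ :=
  pd 0 (pd 0 u) θ φ + (cos θ / sin θ) * pd 0 u θ φ
    + (sin θ ^ 2)⁻¹ * pd 1 (pd 1 u) θ φ

open Function Matrix
open scoped ContDiff

section PartialDerivatives

variable {X : Type*} [NormedAddCommGroup X] [NormedSpace ℝ X] {f g : ℝ → ℝ → X} {θ φ : ℝ}

lemma hasDerivAt_fderiv_uncurry_zero (hf : DifferentiableAt ℝ (uncurry f) (θ, φ)) :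
    HasDerivAt (fun t => f t φ) (fderiv ℝ (uncurry f) (θ, φ) (1, 0)) θ := by
  have h := hf.hasFDerivAt.comp_hasDerivAt θ ((hasDerivAt_id θ).prodMk (hasDerivAt_const θ φ))
  exact h

lemma hasDerivAt_fderiv_uncurry_one (hf : DifferentiableAt ℝ (uncurry f) (θ, φ)) :
    HasDerivAt (fun s => f θ s) (fderiv ℝ (uncurry f) (θ, φ) (0, 1)) φ := by
  have h := hf.hasFDerivAt.comp_hasDerivAt φ ((hasDerivAt_const φ θ).prodMk (hasDerivAt_id φ))
  exact h

lemma pd_eq_fderiv (A : Fin 2) (hf : DifferentiableAt ℝ (uncurry f) (θ, φ)) :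
    pd A f θ φ = fderiv ℝ (uncurry f) (θ, φ) (if A = 0 then (1, 0) else (0, 1)) := by
  unfold pd
  split_ifs
  · exact (hasDerivAt_fderiv_uncurry_zero hf).deriv
  · exact (hasDerivAt_fderiv_uncurry_one hf).deriv

lemma contDiff_uncurry_pd {m n : WithTop ℕ∞} (hf : ContDiff ℝ n (uncurry f)) (hmn : m + 1 ≤ n)
    (A : Fin 2) : ContDiff ℝ m (uncurry (pd A f)) := by
  have hd : Differentiable ℝ (uncurry f) :=
    hf.differentiable (by rintro rfl; simp at hmn)
  have : uncurry (pd A f) =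
      fun p => fderiv ℝ (uncurry f) p (if A = 0 then (1, 0) else (0, 1)) :=
    funext fun p => pd_eq_fderiv A (hd p)
  rw [this]
  exact (hf.fderiv_right hmn).clm_apply contDiff_const

lemma pd_add (A : Fin 2) (hf : DifferentiableAt ℝ (uncurry f) (θ, φ))
    (hg : DifferentiableAt ℝ (uncurry g) (θ, φ)) :
    pd A (fun a b => f a b + g a b) θ φ = pd A f θ φ + pd A g θ φ := by
  unfold pd
  split_ifs
  · exact deriv_add (hasDerivAt_fderiv_uncurry_zero hf).differentiableAt
      (hasDerivAt_fderiv_uncurry_zero hg).differentiableAt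
  · exact deriv_add (hasDerivAt_fderiv_uncurry_one hf).differentiableAt
      (hasDerivAt_fderiv_uncurry_one hg).differentiableAt

lemma pd_const_smul (A : Fin 2) (c : ℝ) (f : ℝ → ℝ → X) :
    pd A (fun a b => c • f a b) θ φ = c • pd A f θ φ := by
  unfold pd
  split_ifs <;> exact deriv_fun_const_smul_field c _

lemma pd_const_mul (A : Fin 2) (c : ℝ) (f : ℝ → ℝ → ℝ) :
    pd A (fun a b => c * f a b) θ φ = c * pd A f θ φ :=
  pd_const_smul A c f

lemma pd_const_add (A : Fin 2) (c : X) (f : ℝ → ℝ → X) :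
    pd A (fun a b => c + f a b) θ φ = pd A f θ φ := by
  unfold pd
  split_ifs <;> exact deriv_const_add c

lemma pd_apply {F : ℝ → ℝ → Fin 4 → ℝ} (A : Fin 2) (hF : DifferentiableAt ℝ (uncurry F) (θ, φ))
    (i : Fin 4) : pd A F θ φ i = pd A (fun a b => F a b i) θ φ := by
  unfold pd
  split_ifs
  · rw [deriv_pi (differentiableAt_pi.1 (hasDerivAt_fderiv_uncurry_zero hF).differentiableAt)]
  · rw [deriv_pi (differentiableAt_pi.1 (hasDerivAt_fderiv_uncurry_one hF).differentiableAt)]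

end PartialDerivatives

lemma ContDiff.mink {E : Type*} [NormedAddCommGroup E] [NormedSpace ℝ E] {n : WithTop ℕ∞}
    {f g : E → Fin 4 → ℝ} (hf : ContDiff ℝ n f) (hg : ContDiff ℝ n g) :
    ContDiff ℝ n fun p => mink (f p) (g p) := by
  unfold _root_.mink
  fun_prop

lemma contDiff_uncurry_met {F : ℝ → ℝ → Fin 4 → ℝ} {m n : WithTop ℕ∞}
    (hF : ContDiff ℝ n (uncurry F)) (hmn : m + 1 ≤ n) (A B : Fin 2) :
    ContDiff ℝ m (uncurry (met F A B)) :=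
  (contDiff_uncurry_pd hF hmn A).mink (contDiff_uncurry_pd hF hmn B)

def inducedLaplacian (F : ℝ → ℝ → Fin 4 → ℝ) (u : ℝ → ℝ → ℝ) (θ φ : ℝ) : ℝ :=
  ∑ A : Fin 2, ∑ B : Fin 2, metInv F θ φ A B *
    (pd A (pd B u) θ φ - ∑ C : Fin 2, christoffel F C A B θ φ * pd C u θ φ)

lemma curvVec_apply {F : ℝ → ℝ → Fin 4 → ℝ} (hF : ContDiff ℝ 2 (uncurry F)) (θ φ : ℝ)
    (i : Fin 4) : curvVec F θ φ i = inducedLaplacian F (fun a b => F a b i) θ φ := by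
  have hd : Differentiable ℝ (uncurry F) := hF.differentiable (by norm_num)
  have hpd (B : Fin 2) : Differentiable ℝ (uncurry (pd B F)) :=
    (contDiff_uncurry_pd (m := 1) hF (by norm_num) B).differentiable (by norm_num)
  have hpdpd (A B : Fin 2) : pd A (pd B F) θ φ i = pd A (pd B fun a b => F a b i) θ φ := by
    rw [pd_apply A (hpd B _)]
    congr 1
    funext a b
    exact pd_apply B (hd _) i
  simp only [curvVec, inducedLaplacian, Finset.sum_apply, Pi.smul_apply, Pi.sub_apply,
    smul_eq_mul, hpdpd, pd_apply _ (hd _)]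

lemma inducedLaplacian_const_add_mul (F : ℝ → ℝ → Fin 4 → ℝ) (c k : ℝ) (u : ℝ → ℝ → ℝ)
    (θ φ : ℝ) :
    inducedLaplacian F (fun a b => c + k * u a b) θ φ = k * inducedLaplacian F u θ φ := by
  have hpd (A : Fin 2) (a b : ℝ) : pd A (fun a b => c + k * u a b) a b = k * pd A u a b := by
    rw [pd_const_add]
    exact pd_const_mul A k u
  have hpdpd (A B : Fin 2) :
      pd A (pd B fun a b => c + k * u a b) θ φ = k * pd A (pd B u) θ φ := by
    rw [funext₂ (hpd B)]
    exact pd_const_mul A k _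
  simp only [inducedLaplacian, hpdpd, hpd, Fin.sum_univ_two]
  ring

section Continuity

variable {F : ℝ → ℝ → ℝ → Fin 4 → ℝ} {ε₀ θ φ : ℝ}

lemma continuousAt_metInv (hmet : ∀ A B, ContinuousAt (fun ε => met (F ε) A B θ φ) ε₀)
    (hdet : (of fun A B => met (F ε₀) A B θ φ).det ≠ 0) (A B : Fin 2) :
    ContinuousAt (fun ε => metInv (F ε) θ φ A B) ε₀ := by
  have hM : ContinuousAt (fun ε => of fun A B => met (F ε) A B θ φ) ε₀ :=
    continuousAt_pi.2 fun A => continuousAt_pi.2 fun B => hmet A B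
  have hinv := (continuousAt_matrix_inv _
    (by simpa only [Ring.inverse_eq_inv'] using continuousAt_inv₀ hdet)).comp hM
  exact continuousAt_pi.1 (continuousAt_pi.1 hinv A) B

lemma continuousAt_christoffel (hinv : ∀ A B, ContinuousAt (fun ε => metInv (F ε) θ φ A B) ε₀)
    (hpd : ∀ C A B, ContinuousAt (fun ε => pd C (met (F ε) A B) θ φ) ε₀) (C A B : Fin 2) :
    ContinuousAt (fun ε => christoffel (F ε) C A B θ φ) ε₀ := by
  unfold christoffel
  fun_prop

lemma continuousAt_inducedLaplacian (u : ℝ → ℝ → ℝ)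
    (hinv : ∀ A B, ContinuousAt (fun ε => metInv (F ε) θ φ A B) ε₀)
    (hΓ : ∀ C A B, ContinuousAt (fun ε => christoffel (F ε) C A B θ φ) ε₀) :
    ContinuousAt (fun ε => inducedLaplacian (F ε) u θ φ) ε₀ := by
  unfold inducedLaplacian
  fun_prop

end Continuity

section AffineFamily

variable {X V : ℝ → ℝ → Fin 4 → ℝ} {θ φ : ℝ}

lemma mink_add_smul (x y v w : Fin 4 → ℝ) (ε : ℝ) :
    mink (x + ε • v) (y + ε • w) = mink x y + ε * (mink x w + mink v y) + ε ^ 2 * mink v w := by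
  simp only [mink, Pi.add_apply, Pi.smul_apply, smul_eq_mul]
  ring

lemma met_add_smul (hX : Differentiable ℝ (uncurry X)) (hV : Differentiable ℝ (uncurry V))
    (ε : ℝ) (A B : Fin 2) :
    met (fun a b => X a b + ε • V a b) A B θ φ = met X A B θ φ
      + ε * (mink (pd A X θ φ) (pd B V θ φ) + mink (pd A V θ φ) (pd B X θ φ))
      + ε ^ 2 * met V A B θ φ := by
  have hpd (A : Fin 2) :
      pd A (fun a b => X a b + ε • V a b) θ φ = pd A X θ φ + ε • pd A V θ φ := by
    rw [pd_add A (hX _) (by exact (hV _).const_smul ε), pd_const_smul]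
  simp only [met, hpd, mink_add_smul]

lemma pd_met_add_smul (hX : ContDiff ℝ 2 (uncurry X)) (hV : ContDiff ℝ 2 (uncurry V))
    (ε : ℝ) (C A B : Fin 2) :
    pd C (met (fun a b => X a b + ε • V a b) A B) θ φ = pd C (met X A B) θ φ
      + ε * pd C (fun a b => mink (pd A X a b) (pd B V a b) + mink (pd A V a b) (pd B X a b)) θ φ
      + ε ^ 2 * pd C (met V A B) θ φ := by
  have hpdX (A : Fin 2) := contDiff_uncurry_pd (m := 1) hX (by norm_num) A
  have hpdV (A : Fin 2) := contDiff_uncurry_pd (m := 1) hV (by norm_num) A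
  have hcross : Differentiable ℝ (uncurry fun a b =>
      mink (pd A X a b) (pd B V a b) + mink (pd A V a b) (pd B X a b)) :=
    (((hpdX A).mink (hpdV B)).add ((hpdV A).mink (hpdX B))).differentiable one_ne_zero
  have hmetX := (contDiff_uncurry_met (m := 1) hX (by norm_num) A B).differentiable one_ne_zero
  have hmetV := (contDiff_uncurry_met (m := 1) hV (by norm_num) A B).differentiable one_ne_zero
  rw [funext₂ fun a b => met_add_smul (hX.differentiable (by norm_num))
    (hV.differentiable (by norm_num)) ε A B (θ := a) (φ := b)]
  rw [pd_add C (by exact (hmetX _).add ((hcross _).const_mul ε)) (by exact (hmetV _).const_mul _),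
    pd_add C (hmetX _) (by exact (hcross _).const_mul ε), pd_const_mul, pd_const_mul]

lemma continuousAt_inducedLaplacian_add_smul (hX : ContDiff ℝ 2 (uncurry X))
    (hV : ContDiff ℝ 2 (uncurry V)) (hdet : (of fun A B => met X A B θ φ).det ≠ 0) (u : ℝ → ℝ → ℝ) :
    ContinuousAt (fun ε : ℝ => inducedLaplacian (fun a b => X a b + ε • V a b) u θ φ) 0 := by
  have hmet (A B : Fin 2) :
      ContinuousAt (fun ε : ℝ => met (fun a b => X a b + ε • V a b) A B θ φ) 0 := by
    simp only [met_add_smul (hX.differentiable (by norm_num)) (hV.differentiable (by norm_num))]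
    fun_prop
  have hpd (C A B : Fin 2) :
      ContinuousAt (fun ε : ℝ => pd C (met (fun a b => X a b + ε • V a b) A B) θ φ) 0 := by
    simp only [pd_met_add_smul hX hV]
    fun_prop
  have hinv := continuousAt_metInv hmet (by simpa using hdet)
  exact continuousAt_inducedLaplacian u hinv (continuousAt_christoffel hinv hpd)

end AffineFamily

lemma hasDerivAt_sub_mul_of_continuousAt {𝕜 : Type*} [NontriviallyNormedField 𝕜] {g : 𝕜 → 𝕜}
    {a : 𝕜} (hg : ContinuousAt g a) : HasDerivAt (fun x => (x - a) * g x) (g a) a := by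
  rw [hasDerivAt_iff_tendsto_slope]
  refine hg.tendsto.mono_left nhdsWithin_le_nhds |>.congr' ?_
  filter_upwards [self_mem_nhdsWithin] with x hx
  rw [slope_def_field, sub_self, zero_mul, sub_zero, mul_div_cancel_left₀ _ (sub_ne_zero.2 hx)]

section RoundSphere

variable {T R : ℝ}

lemma contDiff_uncurry_xi {n : WithTop ℕ∞} : ContDiff ℝ n (uncurry (xi T R)) := by
  refine contDiff_pi.2 fun i => ?_
  fin_cases i <;> simp only [xi, uncurry] <;> simp <;> fun_prop

lemma pd_zero_xi (θ φ : ℝ) :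
    pd 0 (xi T R) θ φ = ![0, R * cos θ * cos φ, R * cos θ * sin φ, -(R * sin θ)] := by
  ext i
  rw [pd_apply 0 ((contDiff_uncurry_xi (n := 1)).differentiable one_ne_zero _)]
  fin_cases i <;> simp [pd, xi]

lemma pd_one_xi (θ φ : ℝ) :
    pd 1 (xi T R) θ φ = ![0, -(R * sin θ * sin φ), R * sin θ * cos φ, 0] := by
  ext i
  rw [pd_apply 1 ((contDiff_uncurry_xi (n := 1)).differentiable one_ne_zero _)]
  fin_cases i <;> simp [pd, xi]

lemma met_xi (A B : Fin 2) :
    met (xi T R) A B = fun θ _ => diagonal ![R ^ 2, R ^ 2 * sin θ ^ 2] A B := by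
  funext θ φ
  have h := sin_sq_add_cos_sq φ
  fin_cases A <;> fin_cases B <;> simp [met, mink, pd_zero_xi, pd_one_xi]
  · linear_combination (R * cos θ) ^ 2 * h + R ^ 2 * sin_sq_add_cos_sq θ
  · ring
  · ring
  · linear_combination (R * sin θ) ^ 2 * h

lemma metInv_xi (hR : R ≠ 0) {θ : ℝ} (hθ : sin θ ≠ 0) (φ : ℝ) :
    metInv (xi T R) θ φ = diagonal ![(R ^ 2)⁻¹, (R ^ 2 * sin θ ^ 2)⁻¹] := by
  have h : (of fun A B => met (xi T R) A B θ φ) = diagonal ![R ^ 2, R ^ 2 * sin θ ^ 2] := by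
    ext A B
    simp [met_xi]
  rw [metInv, h]
  refine inv_eq_left_inv ?_
  rw [diagonal_mul_diagonal, ← diagonal_one]
  congr 1
  ext i
  fin_cases i <;> simp <;> field_simp

lemma inducedLaplacian_xi (hR : R ≠ 0) {θ : ℝ} (hθ : sin θ ≠ 0) (u : ℝ → ℝ → ℝ) (φ : ℝ) :
    inducedLaplacian (xi T R) u θ φ = 1 / R ^ 2 * sphLap u θ φ := by
  simp [inducedLaplacian, christoffel, metInv_xi hR hθ, met_xi, pd, sphLap]
  field_simp
  ring

end RoundSphere

section Perturbation

variable {T R : ℝ} {ψ : Fin 4 → ℝ → ℝ → ℝ}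

def pertDir (T R : ℝ) (ψ : Fin 4 → ℝ → ℝ → ℝ) (θ φ : ℝ) : Fin 4 → ℝ :=
  ψ 0 θ φ • beta0 + ψ 1 θ φ • beta1 θ φ
    + ψ 2 θ φ • pd 0 (xi T R) θ φ + ψ 3 θ φ • pd 1 (xi T R) θ φ

lemma Fpert_eq_add_smul (ε : ℝ) :
    Fpert T R ψ ε = fun θ φ => xi T R θ φ + ε • pertDir T R ψ θ φ :=
  rfl

lemma Fpert_apply_zero (ε θ φ : ℝ) : Fpert T R ψ ε θ φ 0 = T + ε * ψ 0 θ φ := by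
  simp [Fpert, xi, beta0, beta1, pd_zero_xi, pd_one_xi]

lemma contDiff_uncurry_beta1 {n : WithTop ℕ∞} : ContDiff ℝ n (uncurry beta1) := by
  refine contDiff_pi.2 fun i => ?_
  fin_cases i <;> simp only [beta1, uncurry] <;> simp <;> fun_prop

lemma contDiff_uncurry_pertDir {n : WithTop ℕ∞} (hψ : ∀ α, ContDiff ℝ n (uncurry (ψ α))) :
    ContDiff ℝ n (uncurry (pertDir T R ψ)) := by
  have hxi (A : Fin 2) : ContDiff ℝ n (uncurry (pd A (xi T R))) :=
    contDiff_uncurry_pd (n := ω) contDiff_uncurry_xi le_top A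
  exact ((((hψ 0).smul contDiff_const).add ((hψ 1).smul contDiff_uncurry_beta1)).add
    ((hψ 2).smul (hxi 0))).add ((hψ 3).smul (hxi 1))

end Perturbation

/-- Linearization of the time component of the curvature vector at a round sphere in
Minkowski spacetime: `d/dε|₀ H⁰(ε) = (1/R²) Δ̊ψ⁰`. -/
theorem stmt11 (T R : ℝ) (hR : 0 < R)
    (ψ : Fin 4 → ℝ → ℝ → ℝ)
    (hψ : ∀ α : Fin 4, ContDiff ℝ (⊤ : ℕ∞) (fun p : ℝ × ℝ => ψ α p.1 p.2))
    (θ φ : ℝ) (hθ : θ ∈ Set.Ioo 0 π) :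
    deriv (fun ε => curvVec (Fpert T R ψ ε) θ φ 0) 0
      = (1 / R ^ 2) * sphLap (ψ 0) θ φ := by
  have hsin : sin θ ≠ 0 := (sin_pos_of_pos_of_lt_pi hθ.1 hθ.2).ne'
  have hX : ContDiff ℝ 2 (uncurry (xi T R)) := contDiff_uncurry_xi
  have hV : ContDiff ℝ 2 (uncurry (pertDir T R ψ)) :=
    contDiff_uncurry_pertDir fun α => (hψ α).of_le (WithTop.coe_le_coe.2 le_top)
  have hH0 : (fun ε => curvVec (Fpert T R ψ ε) θ φ 0) = fun ε =>
      (ε - 0) * inducedLaplacian (fun a b => xi T R a b + ε • pertDir T R ψ a b) (ψ 0) θ φ := by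
    funext ε
    rw [curvVec_apply (by exact hX.add (hV.const_smul ε)), funext₂ (Fpert_apply_zero ε),
      inducedLaplacian_const_add_mul, sub_zero, Fpert_eq_add_smul]
  have hdet : (of fun A B => met (xi T R) A B θ φ).det ≠ 0 := by
    simp [met_xi, det_fin_two, hR.ne', hsin]
  have hcont := continuousAt_inducedLaplacian_add_smul hX hV hdet (ψ 0)
  rw [hH0, (hasDerivAt_sub_mul_of_continuousAt hcont).deriv]
  simpa using inducedLaplacian_xi hR.ne' hsin (ψ 0) φ
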